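/- A ring R is 'strongly U√Δ' (every non-unit is a commuting product of a unit and an element of √Δ(R)) if and only if R is a local ring. -/

import Mathlib

/- A non-unit `a = u d` with `d ∈ √Δ(R)` has `1 - a` invertible: `(u d)ⁿ = dⁿ uⁿ` puts `1 - aⁿ` among
the units, and `1 - a` divides `1 - aⁿ` on both sides with a commuting cofactor (the geometric sum).
So `a` or `1 - a` is a unit for every `a`, i.e. `R` is local. Conversely, in a local ring every
non-unit `a` lies in `Δ(R)`, since `a u` is again a non-unit; hence `a = 1 · a` is such a product. -/

/-- Δ(R) = {x : 1 - x*u is a unit for every unit u}. -/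
def Delta (R : Type*) [Ring R] : Set R :=
  {x | ∀ u : R, IsUnit u → IsUnit (1 - x * u)}

/-- √Δ(R) = {x : x^n ∈ Δ(R) for some n ≥ 1}. -/
def sqrtDelta (R : Type*) [Ring R] : Set R :=
  {x | ∃ n : ℕ, 1 ≤ n ∧ x ^ n ∈ Delta R}

open Finset

lemma isUnit_one_sub_of_isUnit_one_sub_pow {R : Type*} [Ring R] {a : R} {n : ℕ}
    (h : IsUnit (1 - a ^ n)) : IsUnit (1 - a) := by
  have hcomm : Commute (1 - a) (∑ i ∈ range n, a ^ i) := by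
    rw [Commute, SemiconjBy, mul_neg_geom_sum, geom_sum_mul_neg]
  rw [← mul_neg_geom_sum] at h
  exact (hcomm.isUnit_mul_iff.mp h).1

lemma mem_Delta_of_mem_nonunits {R : Type*} [Ring R] [IsLocalRing R] {a : R}
    (ha : a ∈ nonunits R) : a ∈ Delta R := by
  intro u hu
  have hau : ¬IsUnit (a * u) := fun h => ha (hu.mul_right_iff.mp h)
  exact (IsLocalRing.isUnit_or_isUnit_of_add_one (add_sub_cancel (a * u) 1)).resolve_left hau

lemma mem_sqrtDelta_of_mem_Delta {R : Type*} [Ring R] {a : R} (ha : a ∈ Delta R) :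
    a ∈ sqrtDelta R :=
  ⟨1, le_rfl, by rwa [pow_one]⟩

lemma isUnit_one_sub_mul_of_mem_sqrtDelta {R : Type*} [Ring R] {u d : R} (hu : IsUnit u)
    (hd : d ∈ sqrtDelta R) (hud : Commute u d) : IsUnit (1 - u * d) := by
  obtain ⟨n, -, hdn⟩ := hd
  apply isUnit_one_sub_of_isUnit_one_sub_pow (n := n)
  rw [hud.mul_pow, (hud.pow_pow n n).eq]
  exact hdn (u ^ n) (hu.pow n)

theorem stmt_18 {R : Type*} [Ring R] [Nontrivial R] :
    (∀ a : R, ¬ IsUnit a →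
      ∃ u d : R, IsUnit u ∧ d ∈ sqrtDelta R ∧ a = u * d ∧ u * d = d * u) ↔
    IsLocalRing R := by
  constructor
  · intro H
    refine IsLocalRing.of_isUnit_or_isUnit_one_sub_self fun a =>
      or_iff_not_imp_left.mpr fun ha => ?_
    obtain ⟨u, d, hu, hd, rfl, hud⟩ := H a ha
    exact isUnit_one_sub_mul_of_mem_sqrtDelta hu hd hud
  · intro _ a ha
    exact ⟨1, a, isUnit_one, mem_sqrtDelta_of_mem_Delta (mem_Delta_of_mem_nonunits ha),
      (one_mul a).symm, (Commute.one_left a).eq⟩
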